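/- arXiv:math/0010036 — 5 statements merged into one kernel-verified Lean document; each statement's English description precedes it below -/
import Mathlib

section
/- Suppose z₁,…,z₆ : ℝ → ℂ³ are differentiable functions satisfying at t = 0 the constraints ω(z₂,z₃) = ω(z₁,z₃) = ω(z₁,z₂) = 0, ω(z₁,z₅) + ω(z₂,z₅) − ω(z₃,z₄) = 0, −ω(z₁,z₄) + ω(z₂,z₄) + ω(z₃,z₅) = 0, ω(z₄,z₅) = 0, and satisfying for all t ∈ ℝ the evolution equations dz₁/dt = 2 z₂×z₃, dz₂/dt = 2 z₁×z₃, dz₃/dt = −2 z₁×z₂, dz₄/dt = z₁×z₅ + z₂×z₅ − z₃×z₄, dz₅/dt = −z₁×z₄ + z₂×z₄ + z₃×z₅, dz₆/dt = z₄×z₅. Define Φ : ℝ³ → ℂ³ by Φ(y₁,y₂,t) = ½(y₁²+y₂²)z₁(t) + ½(y₁²−y₂²)z₂(t) + y₁y₂ z₃(t) + y₁ z₄(t) + y₂ z₅(t) + z₆(t). Then at every point (y₁,y₂,t) ∈ ℝ³ one has ω(∂Φ/∂y₁, ∂Φ/∂y₂) = ω(∂Φ/∂y₁, ∂Φ/∂t)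 = ω(∂Φ/∂y₂, ∂Φ/∂t) = 0 and Im Ω(∂Φ/∂y₁, ∂Φ/∂y₂, ∂Φ/∂t) = 0; that is, the image N = Φ(ℝ³) is a special Lagrangian 3-fold in ℂ³ wherever it is nonsingular. -/
noncomputable section

open Complex ComplexConjugate

/-- ℂ³ as triples of complex numbers. -/
abbrev C3 := ℂ × ℂ × ℂ

/-- The standard Kähler form ω(u,v) = Σ Im(conj(u_j)·v_j). -/
def omega3 (u v : C3) : ℝ :=
  (conj u.1 * v.1).im + (conj u.2.1 * v.2.1).im + (conj u.2.2 * v.2.2).im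

/-- The antibilinear cross product on ℂ³. -/
def cross3 (u v : C3) : C3 :=
  ((1/2 : ℂ) * conj (u.2.1 * v.2.2 - u.2.2 * v.2.1),
   (1/2 : ℂ) * conj (u.2.2 * v.1 - u.1 * v.2.2),
   (1/2 : ℂ) * conj (u.1 * v.2.1 - u.2.1 * v.1))

/-- The holomorphic volume form Ω(u,v,w): determinant of the matrix with columns u,v,w. -/
def Omega3 (u v w : C3) : ℂ :=
  u.1 * (v.2.1 * w.2.2 - v.2.2 * w.2.1)
  - v.1 * (u.2.1 * w.2.2 - u.2.2 * w.2.1)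
  + w.1 * (u.2.1 * v.2.2 - u.2.2 * v.2.1)

/-- The map Φ(y₁,y₂,t) = ½(y₁²+y₂²)z₁(t) + ½(y₁²−y₂²)z₂(t) + y₁y₂ z₃(t)
    + y₁ z₄(t) + y₂ z₅(t) + z₆(t). -/
def PhiMap (z₁ z₂ z₃ z₄ z₅ z₆ : ℝ → C3) (y₁ y₂ t : ℝ) : C3 :=
  ((1/2 : ℝ) * (y₁^2 + y₂^2)) • z₁ t + ((1/2 : ℝ) * (y₁^2 - y₂^2)) • z₂ t
  + (y₁ * y₂) • z₃ t + y₁ • z₄ t + y₂ • z₅ t + z₆ t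

/-!
Write `U = ∂Φ/∂y₁` and `V = ∂Φ/∂y₂`. The evolution equations say precisely that
`∂Φ/∂t = U × V`. Since `ω(u, v × w) = -½ Im Ω(u, v, w)` is alternating, `ω(U, U × V)`,
`ω(V, U × V)` and `Im Ω(U, V, U × V) = -2 ω(U × V, U × V)` vanish. For `ω(U, V)`, the equality of
mixed partials gives `∂U/∂t = ∂(U × V)/∂y₁` and `∂V/∂t = ∂(U × V)/∂y₂`, and with the same
alternation this makes `ω(U, V)` constant in `t`; at `t = 0` it is a polynomial in `y₁, y₂`
whose coefficients are the six constraints.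
-/

lemma omega3_add_left (u v w : C3) : omega3 (u + v) w = omega3 u w + omega3 v w := by
  simp only [omega3, Prod.fst_add, Prod.snd_add, map_add, add_mul, add_im]; ring

lemma omega3_add_right (u v w : C3) : omega3 u (v + w) = omega3 u v + omega3 u w := by
  simp only [omega3, Prod.fst_add, Prod.snd_add, mul_add, add_im]; ring

lemma omega3_smul_left (c : ℝ) (u v : C3) : omega3 (c • u) v = c * omega3 u v := by
  simp only [omega3, Prod.smul_fst, Prod.smul_snd, real_smul, map_mul, conj_ofReal,
    mul_assoc, im_ofReal_mul]; ring

lemma omega3_smul_right (c : ℝ) (u v : C3) : omega3 u (c • v) = c * omega3 u v := by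
  simp only [omega3, Prod.smul_fst, Prod.smul_snd, real_smul, mul_left_comm _ (c : ℂ),
    im_ofReal_mul]; ring

lemma omega3_swap (u v : C3) : omega3 v u = -omega3 u v := by
  simp only [omega3, mul_im, conj_re, conj_im]; ring

lemma omega3_self (u : C3) : omega3 u u = 0 := by
  linarith [omega3_swap u u]

lemma Omega3_rotate (u v w : C3) : Omega3 u v w = Omega3 v w u := by
  unfold Omega3; ring

lemma Omega3_self_left (u v : C3) : Omega3 u u v = 0 := by
  unfold Omega3; ring

lemma Omega3_self_right (u v : C3) : Omega3 u v v = 0 := by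
  unfold Omega3; ring

lemma omega3_cross (u v w : C3) : omega3 u (cross3 v w) = -(Omega3 u v w).im / 2 := by
  simp only [omega3, cross3, Omega3, map_sub, map_mul, mul_re, mul_im, sub_re, sub_im, add_im,
    conj_re, conj_im, one_div, inv_re, inv_im, re_ofNat, im_ofNat, normSq_ofNat]
  ring

lemma omega3_cross_self_left (u v : C3) : omega3 u (cross3 u v) = 0 := by
  simp [omega3_cross, Omega3_self_left]

lemma omega3_cross_self_right (u v : C3) : omega3 v (cross3 u v) = 0 := by
  simp [omega3_cross, Omega3_rotate v u v, Omega3_self_right]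

lemma im_Omega3_cross (u v : C3) : (Omega3 u v (cross3 u v)).im = 0 := by
  have h := omega3_cross (cross3 u v) u v
  rw [omega3_self, Omega3_rotate] at h
  linarith

lemma omega3_cross_add_omega3_cross (u v w : C3) :
    omega3 (cross3 u w) v + omega3 u (cross3 w v) = 0 := by
  rw [omega3_swap, omega3_cross, omega3_cross, Omega3_rotate v]; ring

lemma omega3_cross_variation (p q c u v : C3) :
    omega3 (cross3 p v + cross3 u c) v + omega3 u (cross3 c v + cross3 u q) = 0 := by
  rw [omega3_add_left, omega3_add_right, omega3_swap, omega3_cross_self_right,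
    omega3_cross_self_left]
  linarith [omega3_cross_add_omega3_cross u v c]

lemma hasDerivAt_omega3 {f g : ℝ → C3} {f' g' : C3} {t : ℝ}
    (hf : HasDerivAt f f' t) (hg : HasDerivAt g g' t) :
    HasDerivAt (fun s => omega3 (f s) (g s)) (omega3 f' (g t) + omega3 (f t) g') t := by
  let B : C3 →L[ℝ] C3 →L[ℝ] ℝ := LinearMap.toContinuousLinearMap
    (LinearMap.toContinuousLinearMap.toLinearMap ∘ₗ
      LinearMap.mk₂ ℝ omega3 omega3_add_left omega3_smul_left omega3_add_right omega3_smul_right)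
  simpa [B, add_comm] using B.hasDerivAt_of_bilinear (fun _ => hf) (fun _ => hg)

lemma hasDerivAt_sq_smul_add_smul_add {𝕜 E : Type*} [NontriviallyNormedField 𝕜]
    [NormedAddCommGroup E] [NormedSpace 𝕜 E] (a b c : E) (x : 𝕜) :
    HasDerivAt (fun s : 𝕜 => s ^ 2 • a + s • b + c) ((2 * x) • a + b) x := by
  simpa using (((hasDerivAt_pow 2 x).smul_const a).add ((hasDerivAt_id x).smul_const b)).add_const c

def tangentY₁ (a b c d : C3) (y₁ y₂ : ℝ) : C3 := y₁ • (a + b) + y₂ • c + d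

def tangentY₂ (a b c e : C3) (y₁ y₂ : ℝ) : C3 := y₂ • (a - b) + y₁ • c + e

lemma cross3_tangentY (a b c d e : C3) (y₁ y₂ : ℝ) :
    ((1/2 : ℝ) * (y₁ ^ 2 + y₂ ^ 2)) • ((2:ℝ) • cross3 b c)
      + ((1/2 : ℝ) * (y₁ ^ 2 - y₂ ^ 2)) • ((2:ℝ) • cross3 a c)
      + (y₁ * y₂) • ((-2:ℝ) • cross3 a b)
      + y₁ • (cross3 a e + cross3 b e - cross3 c d)
      + y₂ • (-cross3 a d + cross3 b d + cross3 c e) + cross3 d e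
    = cross3 (tangentY₁ a b c d y₁ y₂) (tangentY₂ a b c e y₁ y₂) := by
  ext <;>
  · simp only [tangentY₁, tangentY₂, cross3, Prod.fst_add, Prod.snd_add, Prod.fst_sub,
      Prod.snd_sub, Prod.fst_neg, Prod.snd_neg, Prod.smul_fst, Prod.smul_snd, real_smul, map_add,
      map_sub, map_mul, conj_ofReal]
    push_cast
    ring

lemma tangentY₁_variation (a b c d e : C3) (y₁ y₂ : ℝ) :
    y₁ • ((2:ℝ) • cross3 b c + (2:ℝ) • cross3 a c) + y₂ • ((-2:ℝ) • cross3 a b)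
      + (cross3 a e + cross3 b e - cross3 c d)
    = cross3 (a + b) (tangentY₂ a b c e y₁ y₂) + cross3 (tangentY₁ a b c d y₁ y₂) c := by
  ext <;>
  · simp only [tangentY₁, tangentY₂, cross3, Prod.fst_add, Prod.snd_add, Prod.fst_sub,
      Prod.snd_sub, Prod.smul_fst, Prod.smul_snd, real_smul, map_add,
      map_sub, map_mul, conj_ofReal]
    push_cast
    ring

lemma tangentY₂_variation (a b c d e : C3) (y₁ y₂ : ℝ) :
    y₂ • ((2:ℝ) • cross3 b c - (2:ℝ) • cross3 a c) + y₁ • ((-2:ℝ) • cross3 a b)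
      + (-cross3 a d + cross3 b d + cross3 c e)
    = cross3 c (tangentY₂ a b c e y₁ y₂) + cross3 (tangentY₁ a b c d y₁ y₂) (a - b) := by
  ext <;>
  · simp only [tangentY₁, tangentY₂, cross3, Prod.fst_add, Prod.snd_add, Prod.fst_sub,
      Prod.snd_sub, Prod.fst_neg, Prod.snd_neg, Prod.smul_fst, Prod.smul_snd, real_smul, map_add,
      map_sub, map_mul, conj_ofReal]
    push_cast
    ring

lemma omega3_tangentY (a b c d e : C3) (y₁ y₂ : ℝ) :
    omega3 (tangentY₁ a b c d y₁ y₂) (tangentY₂ a b c e y₁ y₂)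
    = (y₁ ^ 2 + y₂ ^ 2) * omega3 b c + (y₁ ^ 2 - y₂ ^ 2) * omega3 a c
      - 2 * y₁ * y₂ * omega3 a b
      + y₁ * (omega3 a e + omega3 b e - omega3 c d)
      + y₂ * (-omega3 a d + omega3 b d + omega3 c e)
      + omega3 d e := by
  simp only [tangentY₁, tangentY₂, omega3, Prod.fst_add, Prod.snd_add, Prod.fst_sub,
    Prod.snd_sub, Prod.smul_fst, Prod.smul_snd, real_smul, map_add, map_mul, conj_ofReal,
    mul_im, add_re, add_im, sub_re, sub_im, mul_re, conj_re, conj_im, ofReal_re, ofReal_im]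
  ring

section Flow

variable {z₁ z₂ z₃ z₄ z₅ z₆ : ℝ → C3}

lemma hasDerivAt_PhiMap_y₁ (y₁ y₂ t : ℝ) :
    HasDerivAt (fun s => PhiMap z₁ z₂ z₃ z₄ z₅ z₆ s y₂ t)
      (tangentY₁ (z₁ t) (z₂ t) (z₃ t) (z₄ t) y₁ y₂) y₁ := by
  have hΦ : (fun s => PhiMap z₁ z₂ z₃ z₄ z₅ z₆ s y₂ t) = fun s =>
      s ^ 2 • ((1/2 : ℝ) • (z₁ t + z₂ t)) + s • (y₂ • z₃ t + z₄ t)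
        + (((1/2 : ℝ) * y₂ ^ 2) • (z₁ t - z₂ t) + y₂ • z₅ t + z₆ t) := by
    funext s; simp only [PhiMap]; module
  rw [hΦ]
  refine (hasDerivAt_sq_smul_add_smul_add _ _ _ y₁).congr_deriv ?_
  simp only [tangentY₁]; module

lemma hasDerivAt_PhiMap_y₂ (y₁ y₂ t : ℝ) :
    HasDerivAt (fun s => PhiMap z₁ z₂ z₃ z₄ z₅ z₆ y₁ s t)
      (tangentY₂ (z₁ t) (z₂ t) (z₃ t) (z₅ t) y₁ y₂) y₂ := by
  have hΦ : (fun s => PhiMap z₁ z₂ z₃ z₄ z₅ z₆ y₁ s t) = fun s =>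
      s ^ 2 • ((1/2 : ℝ) • (z₁ t - z₂ t)) + s • (y₁ • z₃ t + z₅ t)
        + (((1/2 : ℝ) * y₁ ^ 2) • (z₁ t + z₂ t) + y₁ • z₄ t + z₆ t) := by
    funext s; simp only [PhiMap]; module
  rw [hΦ]
  refine (hasDerivAt_sq_smul_add_smul_add _ _ _ y₂).congr_deriv ?_
  simp only [tangentY₂]; module

lemma hasDerivAt_PhiMap_t
    (hz1 : ∀ t : ℝ, HasDerivAt z₁ ((2:ℝ) • cross3 (z₂ t) (z₃ t)) t)
    (hz2 : ∀ t : ℝ, HasDerivAt z₂ ((2:ℝ) • cross3 (z₁ t) (z₃ t)) t)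
    (hz3 : ∀ t : ℝ, HasDerivAt z₃ ((-2:ℝ) • cross3 (z₁ t) (z₂ t)) t)
    (hz4 : ∀ t : ℝ, HasDerivAt z₄
      (cross3 (z₁ t) (z₅ t) + cross3 (z₂ t) (z₅ t) - cross3 (z₃ t) (z₄ t)) t)
    (hz5 : ∀ t : ℝ, HasDerivAt z₅
      (-cross3 (z₁ t) (z₄ t) + cross3 (z₂ t) (z₄ t) + cross3 (z₃ t) (z₅ t)) t)
    (hz6 : ∀ t : ℝ, HasDerivAt z₆ (cross3 (z₄ t) (z₅ t)) t) (y₁ y₂ t : ℝ) :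
    HasDerivAt (fun s => PhiMap z₁ z₂ z₃ z₄ z₅ z₆ y₁ y₂ s)
      (cross3 (tangentY₁ (z₁ t) (z₂ t) (z₃ t) (z₄ t) y₁ y₂)
        (tangentY₂ (z₁ t) (z₂ t) (z₃ t) (z₅ t) y₁ y₂)) t :=
  ((((((hz1 t).const_smul ((1/2 : ℝ) * (y₁ ^ 2 + y₂ ^ 2))).add
    ((hz2 t).const_smul ((1/2 : ℝ) * (y₁ ^ 2 - y₂ ^ 2)))).add
    ((hz3 t).const_smul (y₁ * y₂))).add ((hz4 t).const_smul y₁)).add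
    ((hz5 t).const_smul y₂)).add (hz6 t) |>.congr_deriv (cross3_tangentY ..)

lemma omega3_tangentY_eq_initial
    (hz1 : ∀ t : ℝ, HasDerivAt z₁ ((2:ℝ) • cross3 (z₂ t) (z₃ t)) t)
    (hz2 : ∀ t : ℝ, HasDerivAt z₂ ((2:ℝ) • cross3 (z₁ t) (z₃ t)) t)
    (hz3 : ∀ t : ℝ, HasDerivAt z₃ ((-2:ℝ) • cross3 (z₁ t) (z₂ t)) t)
    (hz4 : ∀ t : ℝ, HasDerivAt z₄
      (cross3 (z₁ t) (z₅ t) + cross3 (z₂ t) (z₅ t) - cross3 (z₃ t) (z₄ t)) t)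
    (hz5 : ∀ t : ℝ, HasDerivAt z₅
      (-cross3 (z₁ t) (z₄ t) + cross3 (z₂ t) (z₄ t) + cross3 (z₃ t) (z₅ t)) t)
    (y₁ y₂ t : ℝ) :
    omega3 (tangentY₁ (z₁ t) (z₂ t) (z₃ t) (z₄ t) y₁ y₂)
        (tangentY₂ (z₁ t) (z₂ t) (z₃ t) (z₅ t) y₁ y₂)
      = omega3 (tangentY₁ (z₁ 0) (z₂ 0) (z₃ 0) (z₄ 0) y₁ y₂)
          (tangentY₂ (z₁ 0) (z₂ 0) (z₃ 0) (z₅ 0) y₁ y₂) := by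
  have hU : ∀ s, HasDerivAt (fun r => tangentY₁ (z₁ r) (z₂ r) (z₃ r) (z₄ r) y₁ y₂)
      (cross3 (z₁ s + z₂ s) (tangentY₂ (z₁ s) (z₂ s) (z₃ s) (z₅ s) y₁ y₂)
        + cross3 (tangentY₁ (z₁ s) (z₂ s) (z₃ s) (z₄ s) y₁ y₂) (z₃ s)) s := fun s =>
    (((((hz1 s).add (hz2 s)).const_smul y₁).add ((hz3 s).const_smul y₂)).add (hz4 s)
      |>.congr_deriv (tangentY₁_variation ..))
  have hV : ∀ s, HasDerivAt (fun r => tangentY₂ (z₁ r) (z₂ r) (z₃ r) (z₅ r) y₁ y₂)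
      (cross3 (z₃ s) (tangentY₂ (z₁ s) (z₂ s) (z₃ s) (z₅ s) y₁ y₂)
        + cross3 (tangentY₁ (z₁ s) (z₂ s) (z₃ s) (z₄ s) y₁ y₂) (z₁ s - z₂ s)) s := fun s =>
    (((((hz1 s).sub (hz2 s)).const_smul y₂).add ((hz3 s).const_smul y₁)).add (hz5 s)
      |>.congr_deriv (tangentY₂_variation ..))
  have hω : ∀ s, HasDerivAt (fun r => omega3 (tangentY₁ (z₁ r) (z₂ r) (z₃ r) (z₄ r) y₁ y₂)
      (tangentY₂ (z₁ r) (z₂ r) (z₃ r) (z₅ r) y₁ y₂)) 0 s := fun s =>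
    (hasDerivAt_omega3 (hU s) (hV s)).congr_deriv (omega3_cross_variation ..)
  exact is_const_of_deriv_eq_zero (fun s => (hω s).differentiableAt) (fun s => (hω s).deriv) t 0

end Flow

theorem statement_0
    (z₁ z₂ z₃ z₄ z₅ z₆ : ℝ → C3)
    (hc1 : omega3 (z₂ 0) (z₃ 0) = 0)
    (hc2 : omega3 (z₁ 0) (z₃ 0) = 0)
    (hc3 : omega3 (z₁ 0) (z₂ 0) = 0)
    (hc4 : omega3 (z₁ 0) (z₅ 0) + omega3 (z₂ 0) (z₅ 0) - omega3 (z₃ 0) (z₄ 0) = 0)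
    (hc5 : -omega3 (z₁ 0) (z₄ 0) + omega3 (z₂ 0) (z₄ 0) + omega3 (z₃ 0) (z₅ 0) = 0)
    (hc6 : omega3 (z₄ 0) (z₅ 0) = 0)
    (hz1 : ∀ t : ℝ, HasDerivAt z₁ ((2:ℝ) • cross3 (z₂ t) (z₃ t)) t)
    (hz2 : ∀ t : ℝ, HasDerivAt z₂ ((2:ℝ) • cross3 (z₁ t) (z₃ t)) t)
    (hz3 : ∀ t : ℝ, HasDerivAt z₃ ((-2:ℝ) • cross3 (z₁ t) (z₂ t)) t)
    (hz4 : ∀ t : ℝ, HasDerivAt z₄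
      (cross3 (z₁ t) (z₅ t) + cross3 (z₂ t) (z₅ t) - cross3 (z₃ t) (z₄ t)) t)
    (hz5 : ∀ t : ℝ, HasDerivAt z₅
      (-cross3 (z₁ t) (z₄ t) + cross3 (z₂ t) (z₄ t) + cross3 (z₃ t) (z₅ t)) t)
    (hz6 : ∀ t : ℝ, HasDerivAt z₆ (cross3 (z₄ t) (z₅ t)) t) :
    ∀ y₁ y₂ t : ℝ,
      omega3 (deriv (fun s => PhiMap z₁ z₂ z₃ z₄ z₅ z₆ s y₂ t) y₁)
             (deriv (fun s => PhiMap z₁ z₂ z₃ z₄ z₅ z₆ y₁ s t) y₂) = 0 ∧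
      omega3 (deriv (fun s => PhiMap z₁ z₂ z₃ z₄ z₅ z₆ s y₂ t) y₁)
             (deriv (fun s => PhiMap z₁ z₂ z₃ z₄ z₅ z₆ y₁ y₂ s) t) = 0 ∧
      omega3 (deriv (fun s => PhiMap z₁ z₂ z₃ z₄ z₅ z₆ y₁ s t) y₂)
             (deriv (fun s => PhiMap z₁ z₂ z₃ z₄ z₅ z₆ y₁ y₂ s) t) = 0 ∧
      (Omega3 (deriv (fun s => PhiMap z₁ z₂ z₃ z₄ z₅ z₆ s y₂ t) y₁)
              (deriv (fun s => PhiMap z₁ z₂ z₃ z₄ z₅ z₆ y₁ s t) y₂)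
              (deriv (fun s => PhiMap z₁ z₂ z₃ z₄ z₅ z₆ y₁ y₂ s) t)).im = 0 := by
  intro y₁ y₂ t
  rw [(hasDerivAt_PhiMap_y₁ y₁ y₂ t).deriv, (hasDerivAt_PhiMap_y₂ y₁ y₂ t).deriv,
    (hasDerivAt_PhiMap_t hz1 hz2 hz3 hz4 hz5 hz6 y₁ y₂ t).deriv]
  refine ⟨?_, omega3_cross_self_left .., omega3_cross_self_right .., im_Omega3_cross ..⟩
  rw [omega3_tangentY_eq_initial hz1 hz2 hz3 hz4 hz5, omega3_tangentY,
    hc1, hc2, hc3, hc4, hc5, hc6]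
  ring
end
end

section
/- Let Φ : ℝ³ → ℂ³ be a smooth map satisfying at every point ω(∂Φ/∂y₁, ∂Φ/∂y₂) = 0 and (∂Φ/∂y₁) × (∂Φ/∂y₂) = ∂Φ/∂t, where (y₁,y₂,t) are the coordinates on ℝ³. Then at each point (y₁,y₂,t) ∈ ℝ³ the following are equivalent: (i) the real derivative dΦ at (y₁,y₂,t), as an ℝ-linear map ℝ³ → ℂ³, is injective (so Φ is an immersion near the point); (ii) ∂Φ/∂t (y₁,y₂,t) ≠ 0; (iii) ∂Φ/∂y₁ (y₁,y₂,t) and ∂Φ/∂y₂ (y₁,y₂,t) are linearly independent over ℝ. -/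
noncomputable section

open Complex ComplexConjugate

/-- Partial derivative of Φ in the first coordinate. -/
def pd1 (Φ : ℝ × ℝ × ℝ → C3) (p : ℝ × ℝ × ℝ) : C3 :=
  deriv (fun s => Φ (s, p.2.1, p.2.2)) p.1

/-- Partial derivative of Φ in the second coordinate. -/
def pd2 (Φ : ℝ × ℝ × ℝ → C3) (p : ℝ × ℝ × ℝ) : C3 :=
  deriv (fun s => Φ (p.1, s, p.2.2)) p.2.1

/-- Partial derivative of Φ in the third (time) coordinate. -/
def pd3 (Φ : ℝ × ℝ × ℝ → C3) (p : ℝ × ℝ × ℝ) : C3 :=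
  deriv (fun s => Φ (p.1, p.2.1, s)) p.2.2

/-- Hermitian inner product on C3. -/
def ip3 (a b : C3) : ℂ := conj a.1 * b.1 + conj a.2.1 * b.2.1 + conj a.2.2 * b.2.2

lemma C3_real_smul (a : ℝ) (u : C3) :
    a • u = ((a : ℂ) * u.1, (a : ℂ) * u.2.1, (a : ℂ) * u.2.2) := by
  simp [Prod.smul_def, Complex.real_smul]

lemma C3_complex_smul (a : ℂ) (u : C3) :
    a • u = (a * u.1, a * u.2.1, a * u.2.2) := by
  simp [Prod.smul_def, smul_eq_mul]

lemma cross3_smul_self (u : C3) (a : ℝ) : cross3 u (a • u) = 0 := by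
  simp only [cross3, C3_real_smul, Prod.mk_eq_zero]
  refine ⟨?_, ?_, ?_⟩ <;> · rw [show ∀ x y : ℂ, x - y = x - y from fun _ _ => rfl]; ring_nf; simp [mul_comm]

lemma conj_half : (starRingEnd ℂ) (1/2 : ℂ) = 1/2 := by
  rw [map_div₀, map_one]; norm_num [Complex.ext_iff]

lemma ip3_cross_left (u v : C3) : ip3 (cross3 u v) u = 0 := by
  simp only [ip3, cross3, map_mul, map_sub, RingHomCompTriple.comp_apply, Complex.conj_conj,
    conj_half, RingHom.id_apply]
  ring

lemma ip3_cross_right (u v : C3) : ip3 (cross3 u v) v = 0 := by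
  simp only [ip3, cross3, map_mul, map_sub, RingHomCompTriple.comp_apply, Complex.conj_conj,
    conj_half, RingHom.id_apply]
  ring

lemma ip3_add (w a b : C3) : ip3 w (a + b) = ip3 w a + ip3 w b := by
  simp only [ip3, Prod.fst_add, Prod.snd_add]; ring

lemma ip3_rsmul (w : C3) (c : ℝ) (a : C3) : ip3 w (c • a) = (c : ℂ) * ip3 w a := by
  simp only [ip3, C3_real_smul]; ring

lemma ip3_self_ne_zero (w : C3) (h : w ≠ 0) : ip3 w w ≠ 0 := by
  simp only [ip3]
  have h1 : ∀ z : ℂ, conj z * z = (normSq z : ℂ) := fun z => by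
    rw [mul_comm, Complex.mul_conj]
  rw [h1, h1, h1]
  rw [← Complex.ofReal_add, ← Complex.ofReal_add]
  rw [Ne, Complex.ofReal_eq_zero]
  intro hz
  have h01 := Complex.normSq_nonneg w.1
  have h02 := Complex.normSq_nonneg w.2.1
  have h03 := Complex.normSq_nonneg w.2.2
  apply h
  have e1 : normSq w.1 = 0 := by linarith
  have e2 : normSq w.2.1 = 0 := by linarith
  have e3 : normSq w.2.2 = 0 := by linarith
  have := Complex.normSq_eq_zero.mp e1
  have := Complex.normSq_eq_zero.mp e2
  have := Complex.normSq_eq_zero.mp e3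
  exact Prod.ext ‹w.1 = 0› (Prod.ext ‹w.2.1 = 0› ‹w.2.2 = 0›)

lemma dep_of_eqs (u1 u2 u3 v1 v2 v3 : ℂ)
    (h1 : u2 * v3 - u3 * v2 = 0) (h2 : u3 * v1 - u1 * v3 = 0) (h3 : u1 * v2 - u2 * v1 = 0)
    (hu : ¬(u1 = 0 ∧ u2 = 0 ∧ u3 = 0)) :
    ∃ l : ℂ, v1 = l * u1 ∧ v2 = l * u2 ∧ v3 = l * u3 := by
  by_cases c1 : u1 = 0
  · by_cases c2 : u2 = 0
    · have c3 : u3 ≠ 0 := fun h => hu ⟨c1, c2, h⟩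
      refine ⟨v3 / u3, ?_, ?_, ?_⟩
      · rw [div_mul_eq_mul_div, eq_div_iff c3]; linear_combination h2
      · rw [div_mul_eq_mul_div, eq_div_iff c3]; linear_combination -h1
      · rw [div_mul_eq_mul_div, eq_div_iff c3]
    · refine ⟨v2 / u2, ?_, ?_, ?_⟩
      · rw [div_mul_eq_mul_div, eq_div_iff c2]; linear_combination -h3
      · rw [div_mul_eq_mul_div, eq_div_iff c2]
      · rw [div_mul_eq_mul_div, eq_div_iff c2]; linear_combination h1
  · refine ⟨v1 / u1, ?_, ?_, ?_⟩
    · rw [div_mul_eq_mul_div, eq_div_iff c1]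
    · rw [div_mul_eq_mul_div, eq_div_iff c1]; linear_combination h3
    · rw [div_mul_eq_mul_div, eq_div_iff c1]; linear_combination -h2


/-- cross3 = 0 and omega3 = 0 imply real linear dependence. -/
lemma dep_of_cross_eq_zero (u v : C3) (hc : cross3 u v = 0) (ho : omega3 u v = 0) :
    ¬ LinearIndependent ℝ ![u, v] := by
  intro hli
  have hune : u ≠ 0 := by
    have := hli.ne_zero 0
    simpa using this
  have hu : ¬(u.1 = 0 ∧ u.2.1 = 0 ∧ u.2.2 = 0) := by
    intro h
    exact hune (Prod.ext h.1 (Prod.ext h.2.1 h.2.2))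
  have hc1 : u.2.1 * v.2.2 - u.2.2 * v.2.1 = 0 := by
    have := congrArg Prod.fst hc
    simp only [cross3, Prod.fst_zero] at this
    have h2 := (mul_eq_zero.mp this).resolve_left (by norm_num)
    simpa using congrArg conj h2
  have hc2 : u.2.2 * v.1 - u.1 * v.2.2 = 0 := by
    have := congrArg (fun x : C3 => x.2.1) hc
    simp only [cross3, Prod.snd_zero, Prod.fst_zero] at this
    have h2 := (mul_eq_zero.mp this).resolve_left (by norm_num)
    simpa using congrArg conj h2
  have hc3 : u.1 * v.2.1 - u.2.1 * v.1 = 0 := by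
    have := congrArg (fun x : C3 => x.2.2) hc
    simp only [cross3, Prod.snd_zero] at this
    have h2 := (mul_eq_zero.mp this).resolve_left (by norm_num)
    simpa using congrArg conj h2
  obtain ⟨l, e1, e2, e3⟩ := dep_of_eqs u.1 u.2.1 u.2.2 v.1 v.2.1 v.2.2 hc1 hc2 hc3 hu
  -- omega3 u v = im l * |u|^2
  have himl : l.im = 0 := by
    have : omega3 u v = l.im * (normSq u.1 + normSq u.2.1 + normSq u.2.2) := by
      simp only [omega3, e1, e2, e3]
      have h1 : ∀ z : ℂ, conj z * (l * z) = l * (normSq z : ℂ) := fun z => by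
        rw [show conj z * (l * z) = l * (z * conj z) by ring, Complex.mul_conj]
      rw [h1, h1, h1]
      simp [Complex.mul_im]
      ring
    rw [ho] at this
    have hns : normSq u.1 + normSq u.2.1 + normSq u.2.2 ≠ 0 := by
      intro hz
      have h01 := Complex.normSq_nonneg u.1
      have h02 := Complex.normSq_nonneg u.2.1
      have h03 := Complex.normSq_nonneg u.2.2
      apply hune
      have e1' : normSq u.1 = 0 := by linarith
      have e2' : normSq u.2.1 = 0 := by linarith
      have e3' : normSq u.2.2 = 0 := by linarith
      exact Prod.ext (Complex.normSq_eq_zero.mp e1')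
        (Prod.ext (Complex.normSq_eq_zero.mp e2') (Complex.normSq_eq_zero.mp e3'))
    rcases mul_eq_zero.mp this.symm with h | h
    · exact h
    · exact absurd h hns
  have hvre : v = l.re • u := by
    have hl : l = (l.re : ℂ) := by
      rw [Complex.ext_iff]; simp [himl]
    rw [C3_real_smul]
    exact Prod.ext (by rw [e1, ← hl]) (Prod.ext (by rw [e2, ← hl]) (by rw [e3, ← hl]))
  have := (LinearIndependent.pair_iff.mp hli) l.re (-1) (by
    rw [hvre]; module)
  simpa using this.2

/-- Real dependence implies cross3 = 0. -/
lemma cross_eq_zero_of_dep (u v : C3) (h : ¬ LinearIndependent ℝ ![u, v]) :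
    cross3 u v = 0 := by
  rw [LinearIndependent.pair_iff] at h
  push_neg at h
  obtain ⟨s, t, hst, hne⟩ := h
  by_cases ht : t = 0
  · subst ht
    have hs : s ≠ 0 := fun h => hne h rfl
    · have hu0 : u = 0 := by
        have := hst
        simp at this
        rcases this with h | h
        · exact absurd h hs
        · exact h
      subst hu0
      simp [cross3]
  · have hveq : v = (-(s/t)) • u := by
      have h0 : t • v = -(s • u) := by
        rw [eq_neg_iff_add_eq_zero, add_comm]; exact hst
      have hv' : v = (-(t⁻¹ * s)) • u := by
        calc v = t⁻¹ • (t • v) := by rw [smul_smul, inv_mul_cancel₀ ht, one_smul]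
        _ = t⁻¹ • (-(s • u)) := by rw [h0]
        _ = (-(t⁻¹ * s)) • u := by rw [smul_neg, smul_smul, neg_smul]
      rw [hv']
      congr 1
      field_simp
    rw [hveq]
    exact cross3_smul_self u _

theorem statement_4
    (Φ : ℝ × ℝ × ℝ → C3)
    (hsmooth : ContDiff ℝ (⊤ : ℕ∞) Φ)
    (homega : ∀ p : ℝ × ℝ × ℝ, omega3 (pd1 Φ p) (pd2 Φ p) = 0)
    (hcross : ∀ p : ℝ × ℝ × ℝ, cross3 (pd1 Φ p) (pd2 Φ p) = pd3 Φ p) :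
    ∀ p : ℝ × ℝ × ℝ,
      (Function.Injective (fderiv ℝ Φ p) ↔ pd3 Φ p ≠ 0) ∧
      (pd3 Φ p ≠ 0 ↔ LinearIndependent ℝ ![pd1 Φ p, pd2 Φ p]) := by
  intro p
  have hΦ : Differentiable ℝ Φ := hsmooth.differentiable (by simp)
  set u := pd1 Φ p with hu
  set v := pd2 Φ p with hv
  set w := pd3 Φ p with hwdef
  have hw : cross3 u v = w := hcross p
  have ho : omega3 u v = 0 := homega p
  set f := fderiv ℝ Φ p with hf
  -- partial derivatives are fderiv of basis vectors
  have h1 : f (1, 0, 0) = u := by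
    have hc : HasDerivAt (fun s : ℝ => (s, p.2.1, p.2.2) : ℝ → ℝ × ℝ × ℝ) (1, 0, 0) p.1 :=
      HasDerivAt.prodMk (hasDerivAt_id p.1) (hasDerivAt_const _ _)
    have := ((hΦ p).hasFDerivAt.comp_hasDerivAt p.1 hc)
    rw [hu, pd1]
    exact (this.deriv).symm
  have h2 : f (0, 1, 0) = v := by
    have hc : HasDerivAt (fun s : ℝ => (p.1, s, p.2.2) : ℝ → ℝ × ℝ × ℝ) (0, 1, 0) p.2.1 :=
      HasDerivAt.prodMk (hasDerivAt_const _ _) (HasDerivAt.prodMk (hasDerivAt_id p.2.1) (hasDerivAt_const _ _))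
    have := ((hΦ p).hasFDerivAt.comp_hasDerivAt p.2.1 hc)
    rw [hv, pd2]
    exact (this.deriv).symm
  have h3 : f (0, 0, 1) = w := by
    have hc : HasDerivAt (fun s : ℝ => (p.1, p.2.1, s) : ℝ → ℝ × ℝ × ℝ) (0, 0, 1) p.2.2 :=
      HasDerivAt.prodMk (hasDerivAt_const _ _) (HasDerivAt.prodMk (hasDerivAt_const _ _) (hasDerivAt_id p.2.2))
    have := ((hΦ p).hasFDerivAt.comp_hasDerivAt p.2.2 hc)
    rw [hwdef, pd3]
    exact (this.deriv).symm
  have hdecomp : ∀ a b c : ℝ, f (a, b, c) = a • u + b • v + c • w := by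
    intro a b c
    have : (a, b, c) = a • ((1:ℝ), (0:ℝ), (0:ℝ)) + b • ((0:ℝ), (1:ℝ), (0:ℝ)) + c • ((0:ℝ), (0:ℝ), (1:ℝ)) := by
      simp [Prod.ext_iff]
    rw [this, map_add, map_add, map_smul, map_smul, map_smul, h1, h2, h3]
  have hiff2 : w ≠ 0 ↔ LinearIndependent ℝ ![u, v] := by
    constructor
    · intro hwne
      by_contra hdep
      exact hwne (hw ▸ cross_eq_zero_of_dep u v hdep)
    · intro hli
      intro hw0
      exact dep_of_cross_eq_zero u v (hw.trans hw0) ho hli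
  refine ⟨?_, hiff2⟩
  constructor
  · intro hinj hw0
    have : f (0, 0, 1) = f 0 := by rw [h3, hw0, map_zero]
    have := hinj this
    simp [Prod.ext_iff] at this
  · intro hwne
    have hli := hiff2.mp hwne
    rw [injective_iff_map_eq_zero]
    rintro ⟨a, b, c⟩ hz
    rw [hdecomp a b c] at hz
    -- pair with ip3 w
    have hipz : ip3 w (a • u + b • v + c • w) = 0 := by rw [hz]; simp [ip3]
    rw [ip3_add, ip3_add, ip3_rsmul, ip3_rsmul, ip3_rsmul, ← hw,
        ip3_cross_left, ip3_cross_right] at hipz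
    have hc0 : c = 0 := by
      have hwi := ip3_self_ne_zero (cross3 u v) (hw ▸ hwne)
      have h' : (c : ℂ) * ip3 (cross3 u v) (cross3 u v) = 0 := by
        simpa using hipz
      have : (c : ℂ) = 0 := (mul_eq_zero.mp h').resolve_right hwi
      exact_mod_cast this
    subst hc0
    have hz' : a • u + b • v = 0 := by simpa using hz
    obtain ⟨ha, hb⟩ := LinearIndependent.pair_iff.mp hli a b hz'
    simp [ha, hb]
end
end

section
/- Let A, B, D, E ∈ ℂ satisfy Im(A·conj(D) + B·conj(E)) = 0, and define z₁,…,z₅ : ℝ → ℂ³ by z₁(t) = z₂(t) = (e^{it}, −i e^{−it}, 0), z₃(t) = (0, 0, 1), z₄(t) = (D e^{it/2} + E e^{−it/2}, −i conj(D) e^{−it/2} + i conj(E) e^{it/2}, 2A e^{−it/2} − 2 conj(A) e^{it/2} − (2/3) B e^{−3it/2} − (2/3) conj(B) e^{3it/2}), z₅(t) = (A e^{it/2} + B e^{−it/2}, i conj(A) e^{−it/2} − i conj(B) e^{it/2}, 0). Then for all t ∈ ℝ: (i) ω(z₂,z₃) = ω(z₁,z₃) = ω(z₁,z₂) = 0,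 ω(z₁,z₅) + ω(z₂,z₅) − ω(z₃,z₄) = 0, −ω(z₁,z₄) + ω(z₂,z₄) + ω(z₃,z₅) = 0, ω(z₄,z₅) = 0; and (ii) dz₁/dt = 2 z₂×z₃, dz₂/dt = 2 z₁×z₃, dz₃/dt = −2 z₁×z₂, dz₄/dt = z₁×z₅ + z₂×z₅ − z₃×z₄, dz₅/dt = −z₁×z₄ + z₂×z₄ + z₃×z₅. -/
noncomputable section

open Complex ComplexConjugate

/-- z₁(t) = z₂(t) = (e^{it}, −i e^{−it}, 0). -/
def z12 (t : ℝ) : C3 :=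
  (Complex.exp (Complex.I * t), -Complex.I * Complex.exp (-(Complex.I * t)), 0)

/-- z₃(t) = (0,0,1). -/
def z3c (_t : ℝ) : C3 := (0, 0, 1)

/-- z₄(t). -/
def z4c (A B D E : ℂ) (t : ℝ) : C3 :=
  (D * Complex.exp (Complex.I * t / 2) + E * Complex.exp (-(Complex.I * t / 2)),
   -Complex.I * conj D * Complex.exp (-(Complex.I * t / 2))
     + Complex.I * conj E * Complex.exp (Complex.I * t / 2),
   2 * A * Complex.exp (-(Complex.I * t / 2)) - 2 * conj A * Complex.exp (Complex.I * t / 2)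
     - (2/3 : ℂ) * B * Complex.exp (-(3 * Complex.I * t / 2))
     - (2/3 : ℂ) * conj B * Complex.exp (3 * Complex.I * t / 2))

/-- z₅(t). -/
def z5c (A B : ℂ) (t : ℝ) : C3 :=
  (A * Complex.exp (Complex.I * t / 2) + B * Complex.exp (-(Complex.I * t / 2)),
   Complex.I * conj A * Complex.exp (-(Complex.I * t / 2))
     - Complex.I * conj B * Complex.exp (Complex.I * t / 2),
   0)

/-!
Every coordinate of the curves is a Laurent polynomial in `w = exp (I * t / 2)`, and `conj w = w⁻¹`
because `w` lies on the unit circle. Writing `Im z = (z - conj z) / (2 * I)`, each symplectic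
identity becomes an identity between Laurent polynomials in `w` with coefficients in
`A, conj A, …, E, conj E, I`; so does each equation of motion once `d/dt exp (k * I * t / 2)` is
computed. These hold modulo `I ^ 2 = -1` alone, except `ω(z₄, z₅) = 0`, which also needs
`conj A * D + conj B * E = A * conj D + B * conj E`, i.e. the hypothesis
`Im (A * conj D + B * conj E) = 0`.
-/

section HalfPhase

variable (t : ℝ)

lemma conj_exp_I_mul_ofReal_div_two : conj (exp (I * t / 2)) = (exp (I * t / 2))⁻¹ := by
  rw [← exp_conj, ← exp_neg, map_div₀, map_mul, conj_I, conj_ofReal, map_ofNat, neg_mul, neg_div]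

lemma exp_I_mul_ofReal_eq_sq : exp (I * t) = exp (I * t / 2) ^ 2 := by
  rw [← exp_nat_mul]; ring_nf

lemma exp_three_mul_I_mul_ofReal_div_two : exp (3 * I * t / 2) = exp (I * t / 2) ^ 3 := by
  rw [← exp_nat_mul]; ring_nf

end HalfPhase

lemma cross3_self (u : C3) : cross3 u u = 0 := by
  simp [cross3, mul_comm, Prod.ext_iff]

lemma omega3_z3c_z4c (A B D E : ℂ) (t : ℝ) :
    omega3 (z3c t) (z4c A B D E t) = 2 * omega3 (z12 t) (z5c A B t) := by
  have hw := conj_exp_I_mul_ofReal_div_two t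
  have hw0 := exp_ne_zero (I * t / 2)
  apply ofReal_injective
  simp only [omega3, z3c, z4c, z12, z5c, ofReal_add, ofReal_mul, ofReal_ofNat, im_eq_sub_conj,
    exp_neg, exp_I_mul_ofReal_eq_sq, exp_three_mul_I_mul_ofReal_div_two]
  generalize exp (I * t / 2) = w at hw hw0 ⊢
  simp only [map_add, map_sub, map_mul, map_neg, map_div₀, map_ofNat, map_zero, map_pow, map_inv₀,
    hw, conj_conj, conj_I]
  field_simp
  grind [I_sq]

lemma omega3_z4c_z5c (A B D E : ℂ) (h : (A * conj D + B * conj E).im = 0) (t : ℝ) :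
    omega3 (z4c A B D E t) (z5c A B t) = 0 := by
  have hDE : conj A * D + conj B * E = A * conj D + B * conj E := by
    simpa using conj_eq_iff_im.mpr h
  have hw := conj_exp_I_mul_ofReal_div_two t
  have hw0 := exp_ne_zero (I * t / 2)
  apply ofReal_injective
  simp only [omega3, z4c, z5c, ofReal_add, ofReal_zero, im_eq_sub_conj,
    exp_neg, exp_three_mul_I_mul_ofReal_div_two]
  generalize exp (I * t / 2) = w at hw hw0 ⊢
  simp only [map_add, map_sub, map_mul, map_neg, map_div₀, map_ofNat, map_zero, map_pow, map_inv₀,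
    hw, conj_conj, conj_I]
  field_simp
  grind [I_sq]

lemma hasDerivAt_const_mul_ofReal (c : ℂ) (t : ℝ) : HasDerivAt (fun s : ℝ => c * s) c t := by
  simpa using (hasDerivAt_id' t).ofReal_comp.const_mul c

lemma hasDerivAt_z12 (t : ℝ) : HasDerivAt z12 ((2 : ℝ) • cross3 (z12 t) (z3c t)) t := by
  have p := (hasDerivAt_const_mul_ofReal I t).cexp
  have m := (hasDerivAt_const_mul_ofReal I t).neg.cexp
  refine (p.prodMk ((m.const_mul (-I)).prodMk (hasDerivAt_const t 0))).congr_deriv ?_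
  have hw := conj_exp_I_mul_ofReal_div_two t
  have hw0 := exp_ne_zero (I * t / 2)
  simp only [cross3, z12, z3c, Pi.neg_apply, exp_neg, exp_I_mul_ofReal_eq_sq]
  generalize exp (I * t / 2) = w at hw hw0 ⊢
  simp only [map_sub, map_mul, map_neg, map_zero, map_one, map_pow, map_inv₀, hw, conj_I,
    Prod.smul_mk, real_smul, ofReal_ofNat, Prod.mk.injEq]
  refine ⟨?_, ?_, ?_⟩ <;> field_simp <;> grind [I_sq]

lemma hasDerivAt_z4c (A B D E : ℂ) (t : ℝ) :
    HasDerivAt (z4c A B D E)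
      (cross3 (z12 t) (z5c A B t) + cross3 (z12 t) (z5c A B t)
        - cross3 (z3c t) (z4c A B D E t)) t := by
  have p := ((hasDerivAt_const_mul_ofReal I t).div_const 2).cexp
  have m := ((hasDerivAt_const_mul_ofReal I t).div_const 2).neg.cexp
  have p3 := ((hasDerivAt_const_mul_ofReal (3 * I) t).div_const 2).cexp
  have m3 := ((hasDerivAt_const_mul_ofReal (3 * I) t).div_const 2).neg.cexp
  refine (((p.const_mul D).add (m.const_mul E)).prodMk
    (((m.const_mul (-I * conj D)).add (p.const_mul (I * conj E))).prodMk
      ((((m.const_mul (2 * A)).sub (p.const_mul (2 * conj A))).sub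
        (m3.const_mul ((2 / 3 : ℂ) * B))).sub
          (p3.const_mul ((2 / 3 : ℂ) * conj B))))).congr_deriv ?_
  have hw := conj_exp_I_mul_ofReal_div_two t
  have hw0 := exp_ne_zero (I * t / 2)
  simp only [cross3, z12, z3c, z4c, z5c, Pi.neg_apply, exp_neg, exp_I_mul_ofReal_eq_sq,
    exp_three_mul_I_mul_ofReal_div_two]
  generalize exp (I * t / 2) = w at hw hw0 ⊢
  simp only [map_add, map_sub, map_mul, map_neg, map_div₀, map_ofNat, map_zero, map_pow, map_inv₀,
    hw, conj_conj, conj_I, Prod.mk_add_mk, Prod.mk_sub_mk, Prod.mk.injEq]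
  refine ⟨?_, ?_, ?_⟩ <;> field_simp <;> grind [I_sq]

lemma hasDerivAt_z5c (A B : ℂ) (t : ℝ) : HasDerivAt (z5c A B) (cross3 (z3c t) (z5c A B t)) t := by
  have p := ((hasDerivAt_const_mul_ofReal I t).div_const 2).cexp
  have m := ((hasDerivAt_const_mul_ofReal I t).div_const 2).neg.cexp
  refine (((p.const_mul A).add (m.const_mul B)).prodMk
    (((m.const_mul (I * conj A)).sub (p.const_mul (I * conj B))).prodMk
      (hasDerivAt_const t 0))).congr_deriv ?_
  have hw := conj_exp_I_mul_ofReal_div_two t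
  have hw0 := exp_ne_zero (I * t / 2)
  simp only [cross3, z3c, z5c, Pi.neg_apply, exp_neg]
  generalize exp (I * t / 2) = w at hw hw0 ⊢
  simp only [map_add, map_sub, map_mul, map_zero, map_inv₀, hw, conj_conj, conj_I, Prod.mk.injEq]
  refine ⟨?_, ?_, ?_⟩ <;> field_simp <;> grind [I_sq]

theorem statement_7
    (A B D E : ℂ) (h : (A * conj D + B * conj E).im = 0) :
    (∀ t : ℝ,
      omega3 (z12 t) (z3c t) = 0 ∧
      omega3 (z12 t) (z3c t) = 0 ∧
      omega3 (z12 t) (z12 t) = 0 ∧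
      omega3 (z12 t) (z5c A B t) + omega3 (z12 t) (z5c A B t)
        - omega3 (z3c t) (z4c A B D E t) = 0 ∧
      -omega3 (z12 t) (z4c A B D E t) + omega3 (z12 t) (z4c A B D E t)
        + omega3 (z3c t) (z5c A B t) = 0 ∧
      omega3 (z4c A B D E t) (z5c A B t) = 0) ∧
    (∀ t : ℝ,
      HasDerivAt z12 ((2:ℝ) • cross3 (z12 t) (z3c t)) t ∧
      HasDerivAt z12 ((2:ℝ) • cross3 (z12 t) (z3c t)) t ∧
      HasDerivAt z3c ((-2:ℝ) • cross3 (z12 t) (z12 t)) t ∧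
      HasDerivAt (z4c A B D E)
        (cross3 (z12 t) (z5c A B t) + cross3 (z12 t) (z5c A B t)
          - cross3 (z3c t) (z4c A B D E t)) t ∧
      HasDerivAt (z5c A B)
        (-cross3 (z12 t) (z4c A B D E t) + cross3 (z12 t) (z4c A B D E t)
          + cross3 (z3c t) (z5c A B t)) t) := by
  refine ⟨fun t => ?_, fun t => ?_⟩
  · have h13 : omega3 (z12 t) (z3c t) = 0 := by simp [omega3, z12, z3c]
    have h35 : omega3 (z3c t) (z5c A B t) = 0 := by simp [omega3, z3c, z5c]
    refine ⟨h13, h13, omega3_self _, ?_, ?_, omega3_z4c_z5c A B D E h t⟩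
    · rw [omega3_z3c_z4c]; ring
    · rw [h35]; ring
  · refine ⟨hasDerivAt_z12 t, hasDerivAt_z12 t, ?_, hasDerivAt_z4c A B D E t, ?_⟩
    · rw [cross3_self, smul_zero]
      exact hasDerivAt_const t _
    · rw [neg_add_cancel, zero_add]
      exact hasDerivAt_z5c A B t
end
end

section
/- Let w₁, w₂, w₃, p₁, p₂, p₃, q₁, q₂, q₃ : ℝ → ℂ be functions, and define z₁ = (w₁,0,0), z₂ = (0,w₂,0), z₃ = (0,0,w₃), z₄ = (p₁,p₂,q₃), z₅ = (q₁,−q₂,p₃) as maps ℝ → ℂ³. Then: (i) the equations ω(z₂,z₃) = ω(z₁,z₃) = ω(z₁,z₂) = 0 hold automatically; (ii) the equations ω(z₁,z₅) + ω(z₂,z₅) − ω(z₃,z₄) = 0, −ω(z₁,z₄) + ω(z₂,z₄) + ω(z₃,z₅) = 0 and ω(z₄,z₅) = 0 hold if and only if Im(w₁ conj(p₁) − w₂ conj(p₂) − w₃ conj(p₃)) = Im(w₁ conj(q₁) − w₂ conj(q₂) − w₃ conj(q₃)) = Im(p₁ conj(q₁) − p₂ conj(q₂) − p₃ conj(q₃))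 = 0; and (iii) if the functions are differentiable and satisfy dw₁/dt = conj(w₂w₃), dw₂/dt = −conj(w₃w₁), dw₃/dt = −conj(w₁w₂), dp₁/dt = ½(conj(w₂)conj(p₃) + conj(w₃)conj(p₂)), dp₂/dt = −½(conj(w₃)conj(p₁) + conj(w₁)conj(p₃)), dp₃/dt = −½(conj(w₁)conj(p₂) + conj(w₂)conj(p₁)), and the same three equations with q₁, q₂, q₃ in place of p₁, p₂, p₃, then the three quantities Im(w₁ conj(p₁) − w₂ conj(p₂) − w₃ conj(p₃)), Im(w₁ conj(q₁) − w₂ conj(q₂) − w₃ conj(q₃)) and Im(p₁ conj(q₁) − p₂ conj(q₂) − p₃ conj(q₃)) are constant functions of t. -/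
noncomputable section

open Complex ComplexConjugate

/-! With the Hermitian form `B(a, b) = a₁ b̄₁ - a₂ b̄₂ - a₃ b̄₃` of signature
`(1, 2)`, the constraints of (ii) are `Im B(w, p) = Im B(w, q) = Im B(p, q) = 0`. The equations
for `p` and `q` read `a' = L(w) a` with `L(w) a = polarField w a` conj-linear in `a`, and
`w' = L(w) w` as well. Since `B(L(w) a, b) + B(a, L(w) b) = X + conj X` with `X` symmetric in the roles of `a` and `b`,
the derivative of `B(a, b)` along two solutions is real, so `Im B(a, b)` is constant. -/

def hermForm12 (a b : C3) : ℂ :=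
  a.1 * conj b.1 - a.2.1 * conj b.2.1 - a.2.2 * conj b.2.2

/-- The polarization of the three-wave field `N(w) = (conj (w₂ w₃), -conj (w₃ w₁), -conj (w₁ w₂))`,
i.e. `(N(w + a) - N(w) - N(a)) / 2`. -/
def polarField (w a : C3) : C3 :=
  ((1/2 : ℂ) * (conj w.2.1 * conj a.2.2 + conj w.2.2 * conj a.2.1),
   -(1/2 : ℂ) * (conj w.2.2 * conj a.1 + conj w.1 * conj a.2.2),
   -(1/2 : ℂ) * (conj w.1 * conj a.2.1 + conj w.2.1 * conj a.1))

lemma polarField_self (w : C3) :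
    polarField w w = (conj (w.2.1 * w.2.2), -conj (w.2.2 * w.1), -conj (w.1 * w.2.1)) := by
  simp only [polarField, map_mul, Prod.mk.injEq]
  refine ⟨?_, ?_, ?_⟩ <;> ring

lemma im_hermForm12_polarField_add (w a b : C3) :
    (hermForm12 (polarField w a) b + hermForm12 a (polarField w b)).im = 0 := by
  obtain ⟨w₁, w₂, w₃⟩ := w
  obtain ⟨a₁, a₂, a₃⟩ := a
  obtain ⟨b₁, b₂, b₃⟩ := b
  set X : ℂ := (1/2 : ℂ) * conj (w₁ * (a₂ * b₃ + a₃ * b₂) + w₂ * (a₁ * b₃ + a₃ * b₁)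
    + w₃ * (a₁ * b₂ + a₂ * b₁))
  have hX : hermForm12 (polarField (w₁, w₂, w₃) (a₁, a₂, a₃)) (b₁, b₂, b₃)
      + hermForm12 (a₁, a₂, a₃) (polarField (w₁, w₂, w₃) (b₁, b₂, b₃)) = X + conj X := by
    simp only [X, hermForm12, polarField, map_mul, map_add, map_neg, map_div₀, map_one,
      map_ofNat, conj_conj]
    ring
  rw [hX, add_conj, ofReal_im]

lemma omega3_constraints_iff (w₁ w₂ w₃ p₁ p₂ p₃ q₁ q₂ q₃ : ℂ) :
    (omega3 (w₁, 0, 0) (q₁, -q₂, p₃) + omega3 (0, w₂, 0) (q₁, -q₂, p₃)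
        - omega3 (0, 0, w₃) (p₁, p₂, q₃) = 0 ∧
      -omega3 (w₁, 0, 0) (p₁, p₂, q₃) + omega3 (0, w₂, 0) (p₁, p₂, q₃)
        + omega3 (0, 0, w₃) (q₁, -q₂, p₃) = 0 ∧
      omega3 (p₁, p₂, q₃) (q₁, -q₂, p₃) = 0) ↔
    ((hermForm12 (w₁, w₂, w₃) (p₁, p₂, p₃)).im = 0 ∧
      (hermForm12 (w₁, w₂, w₃) (q₁, q₂, q₃)).im = 0 ∧
      (hermForm12 (p₁, p₂, p₃) (q₁, q₂, q₃)).im = 0) := by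
  simp only [omega3, hermForm12, mul_im, sub_im, neg_re, neg_im, conj_re, conj_im, zero_re,
    zero_im]
  constructor <;> rintro ⟨h₁, h₂, h₃⟩ <;> exact ⟨by linarith, by linarith, by linarith⟩

section Prod

variable {𝕜 E F : Type*} [NontriviallyNormedField 𝕜] [NormedAddCommGroup E] [NormedSpace 𝕜 E]
  [NormedAddCommGroup F] [NormedSpace 𝕜 F] {c : 𝕜 → E × F} {c' : E × F} {t : 𝕜}

theorem HasDerivAt.fst (hc : HasDerivAt c c' t) : HasDerivAt (fun s => (c s).1) c'.1 t :=
  (ContinuousLinearMap.fst 𝕜 E F).hasFDerivAt.comp_hasDerivAt t hc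

theorem HasDerivAt.snd (hc : HasDerivAt c c' t) : HasDerivAt (fun s => (c s).2) c'.2 t :=
  (ContinuousLinearMap.snd 𝕜 E F).hasFDerivAt.comp_hasDerivAt t hc

end Prod

theorem HasDerivAt.hermForm12 {a b : ℝ → C3} {a' b' : C3} {t : ℝ}
    (ha : HasDerivAt a a' t) (hb : HasDerivAt b b' t) :
    HasDerivAt (fun s => hermForm12 (a s) (b s)) (hermForm12 a' (b t) + hermForm12 (a t) b') t := by
  have h := ((ha.fst.mul hb.fst.star).sub (ha.snd.fst.mul hb.snd.fst.star)).sub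
    (ha.snd.snd.mul hb.snd.snd.star)
  refine h.congr_deriv ?_
  simp only [_root_.hermForm12, starRingEnd_apply]
  ring

lemma im_eq_of_hasDerivAt {F F' : ℝ → ℂ} (hF : ∀ t, HasDerivAt F (F' t) t)
    (hF' : ∀ t, (F' t).im = 0) (s t : ℝ) : (F s).im = (F t).im := by
  have him : ∀ x, HasDerivAt (fun y => (F y).im) 0 x := fun x => by
    have h : HasDerivAt (fun y => (F y).im) (F' x).im x :=
      imCLM.hasFDerivAt.comp_hasDerivAt x (hF x)
    rwa [hF' x] at h
  exact is_const_of_deriv_eq_zero (fun x => (him x).differentiableAt) (fun x => (him x).deriv) s t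

lemma im_hermForm12_eq_of_hasDerivAt_polarField {w a b : ℝ → C3}
    (ha : ∀ t, HasDerivAt a (polarField (w t) (a t)) t)
    (hb : ∀ t, HasDerivAt b (polarField (w t) (b t)) t) (s t : ℝ) :
    (hermForm12 (a s) (b s)).im = (hermForm12 (a t) (b t)).im :=
  im_eq_of_hasDerivAt (fun t => (ha t).hermForm12 (hb t))
    (fun t => im_hermForm12_polarField_add (w t) (a t) (b t)) s t

theorem statement_10
    (w₁ w₂ w₃ p₁ p₂ p₃ q₁ q₂ q₃ : ℝ → ℂ)
    (z₁ z₂ z₃ z₄ z₅ : ℝ → C3)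
    (hz1 : ∀ t, z₁ t = (w₁ t, 0, 0))
    (hz2 : ∀ t, z₂ t = (0, w₂ t, 0))
    (hz3 : ∀ t, z₃ t = (0, 0, w₃ t))
    (hz4 : ∀ t, z₄ t = (p₁ t, p₂ t, q₃ t))
    (hz5 : ∀ t, z₅ t = (q₁ t, -q₂ t, p₃ t)) :
    -- (i) the first three constraints hold automatically
    (∀ t : ℝ, omega3 (z₂ t) (z₃ t) = 0 ∧ omega3 (z₁ t) (z₃ t) = 0 ∧
      omega3 (z₁ t) (z₂ t) = 0) ∧
    -- (ii) the remaining constraints are equivalent to the Im conditions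
    (∀ t : ℝ,
      (omega3 (z₁ t) (z₅ t) + omega3 (z₂ t) (z₅ t) - omega3 (z₃ t) (z₄ t) = 0 ∧
       -omega3 (z₁ t) (z₄ t) + omega3 (z₂ t) (z₄ t) + omega3 (z₃ t) (z₅ t) = 0 ∧
       omega3 (z₄ t) (z₅ t) = 0)
      ↔
      ((w₁ t * conj (p₁ t) - w₂ t * conj (p₂ t) - w₃ t * conj (p₃ t)).im = 0 ∧
       (w₁ t * conj (q₁ t) - w₂ t * conj (q₂ t) - w₃ t * conj (q₃ t)).im = 0 ∧
       (p₁ t * conj (q₁ t) - p₂ t * conj (q₂ t) - p₃ t * conj (q₃ t)).im = 0)) ∧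
    -- (iii) under the evolution equations the three Im quantities are constant
    ((∀ t : ℝ, HasDerivAt w₁ (conj (w₂ t * w₃ t)) t) →
     (∀ t : ℝ, HasDerivAt w₂ (-conj (w₃ t * w₁ t)) t) →
     (∀ t : ℝ, HasDerivAt w₃ (-conj (w₁ t * w₂ t)) t) →
     (∀ t : ℝ, HasDerivAt p₁ ((1/2 : ℂ) * (conj (w₂ t) * conj (p₃ t)
        + conj (w₃ t) * conj (p₂ t))) t) →
     (∀ t : ℝ, HasDerivAt p₂ (-(1/2 : ℂ) * (conj (w₃ t) * conj (p₁ t)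
        + conj (w₁ t) * conj (p₃ t))) t) →
     (∀ t : ℝ, HasDerivAt p₃ (-(1/2 : ℂ) * (conj (w₁ t) * conj (p₂ t)
        + conj (w₂ t) * conj (p₁ t))) t) →
     (∀ t : ℝ, HasDerivAt q₁ ((1/2 : ℂ) * (conj (w₂ t) * conj (q₃ t)
        + conj (w₃ t) * conj (q₂ t))) t) →
     (∀ t : ℝ, HasDerivAt q₂ (-(1/2 : ℂ) * (conj (w₃ t) * conj (q₁ t)
        + conj (w₁ t) * conj (q₃ t))) t) →
     (∀ t : ℝ, HasDerivAt q₃ (-(1/2 : ℂ) * (conj (w₁ t) * conj (q₂ t)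
        + conj (w₂ t) * conj (q₁ t))) t) →
     (∀ s t : ℝ,
       (w₁ s * conj (p₁ s) - w₂ s * conj (p₂ s) - w₃ s * conj (p₃ s)).im
         = (w₁ t * conj (p₁ t) - w₂ t * conj (p₂ t) - w₃ t * conj (p₃ t)).im ∧
       (w₁ s * conj (q₁ s) - w₂ s * conj (q₂ s) - w₃ s * conj (q₃ s)).im
         = (w₁ t * conj (q₁ t) - w₂ t * conj (q₂ t) - w₃ t * conj (q₃ t)).im ∧
       (p₁ s * conj (q₁ s) - p₂ s * conj (q₂ s) - p₃ s * conj (q₃ s)).im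
         = (p₁ t * conj (q₁ t) - p₂ t * conj (q₂ t) - p₃ t * conj (q₃ t)).im)) := by
  refine ⟨fun t => by simp [omega3, hz1 t, hz2 t, hz3 t], fun t => ?_, ?_⟩
  · rw [hz1 t, hz2 t, hz3 t, hz4 t, hz5 t]
    exact omega3_constraints_iff (w₁ t) (w₂ t) (w₃ t) (p₁ t) (p₂ t) (p₃ t) (q₁ t) (q₂ t) (q₃ t)
  · intro hw₁ hw₂ hw₃ hp₁ hp₂ hp₃ hq₁ hq₂ hq₃ s t
    set W : ℝ → C3 := fun t => (w₁ t, w₂ t, w₃ t)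
    set P : ℝ → C3 := fun t => (p₁ t, p₂ t, p₃ t)
    set Q : ℝ → C3 := fun t => (q₁ t, q₂ t, q₃ t)
    have hW : ∀ t, HasDerivAt W (polarField (W t) (W t)) t := fun t => by
      rw [polarField_self]
      exact (hw₁ t).prodMk ((hw₂ t).prodMk (hw₃ t))
    have hP : ∀ t, HasDerivAt P (polarField (W t) (P t)) t :=
      fun t => (hp₁ t).prodMk ((hp₂ t).prodMk (hp₃ t))
    have hQ : ∀ t, HasDerivAt Q (polarField (W t) (Q t)) t :=
      fun t => (hq₁ t).prodMk ((hq₂ t).prodMk (hq₃ t))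
    exact ⟨im_hermForm12_eq_of_hasDerivAt_polarField hW hP s t,
      im_hermForm12_eq_of_hasDerivAt_polarField hW hQ s t,
      im_hermForm12_eq_of_hasDerivAt_polarField hP hQ s t⟩
end
end

section
/- Let w₁, w₂, w₃ : ℝ → ℝ be real-valued functions and let p₁, p₂, p₃ : ℝ → ℂ be differentiable functions satisfying dp₁/dt = ½(w₂ conj(p₃) + w₃ conj(p₂)), dp₂/dt = −½(w₃ conj(p₁) + w₁ conj(p₃)) and dp₃/dt = −½(w₁ conj(p₂) + w₂ conj(p₁)). Write p_j = u_j + i v_j with u_j, v_j : ℝ → ℝ. Then: (i) du₁/dt = ½(w₂u₃ + w₃u₂), du₂/dt = −½(w₃u₁ + w₁u₃), du₃/dt = −½(w₁u₂ + w₂u₁); (ii) dv₁/dt = −½(w₂v₃ + w₃v₂), dv₂/dt = ½(w₃v₁ + w₁v₃), dv₃/dt = ½(w₁v₂ + w₂v₁); and (iii) the function u₁v₁ − u₂v₂ − u₃v₃ is constant. -/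
/-!
Conjugation fixes real parts and negates imaginary parts, so the real parts `u_j` and the
imaginary parts `v_j` satisfy the same real linear system with opposite signs of `w`. In the
product rule for `u₁v₁ - u₂v₂ - u₃v₃` the resulting terms cancel pairwise, so its derivative
vanishes identically.
-/

noncomputable section

open Complex ComplexConjugate

theorem HasDerivAt.re {p : ℝ → ℂ} {p' : ℂ} {t : ℝ} (h : HasDerivAt p p' t) :
    HasDerivAt (fun s => (p s).re) p'.re t :=
  reCLM.hasFDerivAt.comp_hasDerivAt t h

theorem HasDerivAt.im {p : ℝ → ℂ} {p' : ℂ} {t : ℝ} (h : HasDerivAt p p' t) :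
    HasDerivAt (fun s => (p s).im) p'.im t :=
  imCLM.hasFDerivAt.comp_hasDerivAt t h

theorem is_const_of_hasDerivAt_zero {f : ℝ → ℝ} (hf : ∀ t, HasDerivAt f 0 t) (s t : ℝ) :
    f s = f t :=
  is_const_of_deriv_eq_zero (fun x => (hf x).differentiableAt) (fun x => (hf x).deriv) s t

theorem re_half_mul_ofReal_mul_conj_add (a b : ℝ) (z w : ℂ) :
    ((1/2 : ℂ) * ((a : ℂ) * conj z + (b : ℂ) * conj w)).re = 1/2 * (a * z.re + b * w.re) := by
  rw [show (1/2 : ℂ) = ((1/2 : ℝ) : ℂ) by norm_num, re_ofReal_mul]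
  simp only [add_re, re_ofReal_mul, conj_re]

theorem im_half_mul_ofReal_mul_conj_add (a b : ℝ) (z w : ℂ) :
    ((1/2 : ℂ) * ((a : ℂ) * conj z + (b : ℂ) * conj w)).im = -(1/2) * (a * z.im + b * w.im) := by
  rw [show (1/2 : ℂ) = ((1/2 : ℝ) : ℂ) by norm_num, im_ofReal_mul]
  simp only [add_im, im_ofReal_mul, conj_im]
  ring

theorem is_const_sub_sub_of_hasDerivAt {w₁ w₂ w₃ u₁ u₂ u₃ v₁ v₂ v₃ : ℝ → ℝ}
    (hu₁ : ∀ t, HasDerivAt u₁ ((1/2) * (w₂ t * u₃ t + w₃ t * u₂ t)) t)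
    (hu₂ : ∀ t, HasDerivAt u₂ (-(1/2) * (w₃ t * u₁ t + w₁ t * u₃ t)) t)
    (hu₃ : ∀ t, HasDerivAt u₃ (-(1/2) * (w₁ t * u₂ t + w₂ t * u₁ t)) t)
    (hv₁ : ∀ t, HasDerivAt v₁ (-(1/2) * (w₂ t * v₃ t + w₃ t * v₂ t)) t)
    (hv₂ : ∀ t, HasDerivAt v₂ ((1/2) * (w₃ t * v₁ t + w₁ t * v₃ t)) t)
    (hv₃ : ∀ t, HasDerivAt v₃ ((1/2) * (w₁ t * v₂ t + w₂ t * v₁ t)) t) (s t : ℝ) :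
    u₁ s * v₁ s - u₂ s * v₂ s - u₃ s * v₃ s = u₁ t * v₁ t - u₂ t * v₂ t - u₃ t * v₃ t := by
  refine is_const_of_hasDerivAt_zero (f := fun t => u₁ t * v₁ t - u₂ t * v₂ t - u₃ t * v₃ t)
    (fun t => ?_) s t
  exact ((((hu₁ t).mul (hv₁ t)).sub ((hu₂ t).mul (hv₂ t))).sub ((hu₃ t).mul (hv₃ t))).congr_deriv
    (by ring)

theorem statement_11
    (w₁ w₂ w₃ : ℝ → ℝ) (p₁ p₂ p₃ : ℝ → ℂ)
    (hp1 : ∀ t : ℝ, HasDerivAt p₁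
      ((1/2 : ℂ) * ((w₂ t : ℂ) * conj (p₃ t) + (w₃ t : ℂ) * conj (p₂ t))) t)
    (hp2 : ∀ t : ℝ, HasDerivAt p₂
      (-(1/2 : ℂ) * ((w₃ t : ℂ) * conj (p₁ t) + (w₁ t : ℂ) * conj (p₃ t))) t)
    (hp3 : ∀ t : ℝ, HasDerivAt p₃
      (-(1/2 : ℂ) * ((w₁ t : ℂ) * conj (p₂ t) + (w₂ t : ℂ) * conj (p₁ t))) t) :
    -- (i) equations for the real parts u_j = Re p_j
    (∀ t : ℝ, HasDerivAt (fun s => (p₁ s).re)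
      ((1/2) * (w₂ t * (p₃ t).re + w₃ t * (p₂ t).re)) t) ∧
    (∀ t : ℝ, HasDerivAt (fun s => (p₂ s).re)
      (-(1/2) * (w₃ t * (p₁ t).re + w₁ t * (p₃ t).re)) t) ∧
    (∀ t : ℝ, HasDerivAt (fun s => (p₃ s).re)
      (-(1/2) * (w₁ t * (p₂ t).re + w₂ t * (p₁ t).re)) t) ∧
    -- (ii) equations for the imaginary parts v_j = Im p_j
    (∀ t : ℝ, HasDerivAt (fun s => (p₁ s).im)
      (-(1/2) * (w₂ t * (p₃ t).im + w₃ t * (p₂ t).im)) t) ∧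
    (∀ t : ℝ, HasDerivAt (fun s => (p₂ s).im)
      ((1/2) * (w₃ t * (p₁ t).im + w₁ t * (p₃ t).im)) t) ∧
    (∀ t : ℝ, HasDerivAt (fun s => (p₃ s).im)
      ((1/2) * (w₁ t * (p₂ t).im + w₂ t * (p₁ t).im)) t) ∧
    -- (iii) u₁v₁ − u₂v₂ − u₃v₃ is constant
    (∀ s t : ℝ,
      (p₁ s).re * (p₁ s).im - (p₂ s).re * (p₂ s).im - (p₃ s).re * (p₃ s).im
      = (p₁ t).re * (p₁ t).im - (p₂ t).re * (p₂ t).im - (p₃ t).re * (p₃ t).im) := by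
  refine ⟨?u₁, ?u₂, ?u₃, ?v₁, ?v₂, ?v₃, is_const_sub_sub_of_hasDerivAt ?u₁ ?u₂ ?u₃ ?v₁ ?v₂ ?v₃⟩
  all_goals intro t
  case u₁ => simpa only [re_half_mul_ofReal_mul_conj_add] using (hp1 t).re
  case u₂ => simpa only [neg_mul, neg_re, re_half_mul_ofReal_mul_conj_add] using (hp2 t).re
  case u₃ => simpa only [neg_mul, neg_re, re_half_mul_ofReal_mul_conj_add] using (hp3 t).re
  case v₁ => simpa only [im_half_mul_ofReal_mul_conj_add] using (hp1 t).im
  case v₂ => simpa only [neg_mul, neg_im, neg_neg, im_half_mul_ofReal_mul_conj_add] using (hp2 t).im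
  case v₃ => simpa only [neg_mul, neg_im, neg_neg, im_half_mul_ofReal_mul_conj_add] using (hp3 t).im
end
end
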